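/- Assume the random flow setup below and let t* = min(1/(2‖D^{(1)}V‖_{∞,M}), t₀) (with 1/0 := ∞). Then for all t ∈ (0, t*], all x ∈ K, and all i ∈ {1,…,n}, the partial derivative ∂_i T_t g(x) exists and ∂_i T_t g(x) = E[ ∇g(Y^x(t,·)) · D_iY^x(t,·) ], where for each ω, D_iY^x(t,ω) := lim_{u→0} (Y^{x+u e_i}(t,ω) − Y^x(t,ω))/u (this limit exists) and · denotes the Euclidean inner product on ℝⁿ. -/

import Mathlib

open MeasureTheory Filter Topology Set

/-- The partial derivative of `g : ℝⁿ → ℝ` in the `i`-th coordinate direction. -/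
noncomputable def pderiv' {n : ℕ} (i : Fin n) (g : (Fin n → ℝ) → ℝ) : (Fin n → ℝ) → ℝ :=
  fun x => fderiv ℝ g x (Pi.single i 1)

/-- The iterated partial derivative `D^β g` associated with a multi-index `β : Fin n → ℕ`. -/
noncomputable def mderiv' {n : ℕ} (β : Fin n → ℕ) (g : (Fin n → ℝ) → ℝ) : (Fin n → ℝ) → ℝ :=
  (List.finRange n).foldr (fun i h => (pderiv' i)^[β i] h) g

/-- `‖D^{(j)}V‖_{∞,U} = Σ_{|β|=j} Σ_{k=1}^{n} sup_{x∈U} |D^β V_k(x)|`. -/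
noncomputable def DjNorm {n : ℕ} (j : ℕ) (V : (Fin n → ℝ) → Fin n → ℝ)
    (U : Set (Fin n → ℝ)) : ℝ :=
  ∑ β ∈ Finset.univ.filter (fun β : Fin n → Fin (j + 1) => ∑ i, (β i : ℕ) = j),
    ∑ k : Fin n,
      sSup ((fun x => |mderiv' (fun i => (β i : ℕ)) (fun z => V z k) x|) '' U)

/-- `t* = min(1/(2‖D^{(1)}V‖_{∞,M}), t₀)`, with the convention `1/0 = ∞`. -/
noncomputable def tstar {n : ℕ} (V : (Fin n → ℝ) → Fin n → ℝ) (M : Set (Fin n → ℝ))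
    (t₀ : ℝ) : ℝ :=
  if DjNorm 1 V M = 0 then t₀ else min (1 / (2 * DjNorm 1 V M)) t₀

/-!
Fix `ω`. The paths started at `x` and at `x + u eᵢ` are driven by the same noise `X`, so their
difference solves a noise-free integral equation. Taking suprema over `[0, t]` in that equation,
the condition `t ‖D⁽¹⁾V‖ ≤ 1/2` absorbs the linear term and gives `‖Y^{x+ueᵢ} - Y^x‖ ≤ 2|u|`.
Expanding `V` to second order around `Y^x` then shows that the difference quotients
`u⁻¹ (Y^{x+ueᵢ}(t) - Y^x(t))` form a Cauchy family as `u → 0`; their limit is `DᵢY^x(t)`.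
The first bound also makes `u ↦ g(Y^{x+ueᵢ}(t))` Lipschitz uniformly in `ω`, so the derivative of
`T_t g` can be taken under the expectation.
-/

theorem ContinuousLinearMap.norm_le_sum_norm_apply_single {ι F : Type*} [Fintype ι]
    [DecidableEq ι] [NormedAddCommGroup F] [NormedSpace ℝ F] (L : (ι → ℝ) →L[ℝ] F) :
    ‖L‖ ≤ ∑ j, ‖L (Pi.single j 1)‖ := by
  refine L.opNorm_le_bound (by positivity) fun v => ?_
  calc ‖L v‖ = ‖∑ j, v j • L (Pi.single j 1)‖ := by
        conv_lhs => rw [← Finset.univ_sum_single v]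
        simp only [map_sum, ← L.map_smul, ← Pi.single_smul, smul_eq_mul, mul_one]
    _ ≤ ∑ j, ‖v‖ * ‖L (Pi.single j 1)‖ := by
        refine norm_sum_le_of_le _ fun j _ => ?_
        rw [norm_smul]
        exact mul_le_mul_of_nonneg_right (norm_le_pi_norm v j) (norm_nonneg _)
    _ = (∑ j, ‖L (Pi.single j 1)‖) * ‖v‖ := by rw [← Finset.mul_sum, mul_comm]

theorem pi_norm_le_sum_abs {κ : Type*} [Fintype κ] (w : κ → ℝ) : ‖w‖ ≤ ∑ k, |w k| :=
  (pi_norm_le_iff_of_nonneg (by positivity)).2 fun k =>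
    Finset.single_le_sum (f := fun k => |w k|) (fun _ _ => abs_nonneg _) (Finset.mem_univ k)

theorem ContinuousLinearMap.norm_le_sum_sum_abs_apply_single {ι κ : Type*} [Fintype ι]
    [DecidableEq ι] [Fintype κ] (L : (ι → ℝ) →L[ℝ] (κ → ℝ)) :
    ‖L‖ ≤ ∑ j, ∑ k, |L (Pi.single j 1) k| :=
  L.norm_le_sum_norm_apply_single.trans (Finset.sum_le_sum fun _ _ => pi_norm_le_sum_abs _)

theorem exists_forall_abs_le_of_bddAbove {ι α : Type*} [Finite ι] {f : ι → α → ℝ} {s : Set α}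
    (h : ∀ i, BddAbove ((fun y => |f i y|) '' s)) : ∃ C, 0 ≤ C ∧ ∀ i, ∀ y ∈ s, |f i y| ≤ C := by
  choose C hC using h
  obtain ⟨B, hB⟩ := Finite.exists_le C
  exact ⟨max B 0, le_max_right _ _,
    fun i y hy => (hC i (mem_image_of_mem _ hy)).trans ((hB i).trans (le_max_left _ _))⟩

theorem Convex.norm_sub_sub_fderiv_le {E F : Type*} [NormedAddCommGroup E] [NormedSpace ℝ E]
    [NormedAddCommGroup F] [NormedSpace ℝ F] {f : E → F} {s : Set E} (hs : Convex ℝ s)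
    (hf : ∀ x ∈ s, DifferentiableAt ℝ f x) {C : ℝ} (hC0 : 0 ≤ C)
    (hC : ∀ a ∈ s, ∀ b ∈ s, ‖fderiv ℝ f a - fderiv ℝ f b‖ ≤ C * ‖a - b‖) {a b : E}
    (ha : a ∈ s) (hb : b ∈ s) :
    ‖f a - f b - fderiv ℝ f b (a - b)‖ ≤ C * ‖a - b‖ ^ 2 := by
  have hball : ∀ z ∈ s ∩ Metric.closedBall b ‖a - b‖,
      ‖fderiv ℝ f z - fderiv ℝ f b‖ ≤ C * ‖a - b‖ := fun z hz =>
    (hC z hz.1 b hb).trans (mul_le_mul_of_nonneg_left (by simpa [dist_eq_norm] using hz.2) hC0)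
  have := (hs.inter (convex_closedBall b _)).norm_image_sub_le_of_norm_fderiv_le'
    (fun z hz => hf z hz.1) hball ⟨hb, Metric.mem_closedBall_self (norm_nonneg _)⟩
    ⟨ha, by simp [dist_eq_norm]⟩
  rwa [mul_assoc, ← sq] at this

theorem List.foldr_iterate_single {ι α : Type*} [DecidableEq ι] (T : ι → α → α) (a : ι) (m : ℕ)
    (g : α) {l : List ι} (hl : l.Nodup) :
    l.foldr (fun i h => (T i)^[(Pi.single a m : ι → ℕ) i] h) g
      = if a ∈ l then (T a)^[m] g else g := by
  induction l with
  | nil => simp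
  | cons c l ih =>
    obtain ⟨hcl, hl⟩ := List.nodup_cons.1 hl
    rcases eq_or_ne c a with rfl | hca
    · simp [ih hl, hcl]
    · simp [ih hl, hca, hca.symm]

theorem List.foldr_iterate_single_add_single {ι α : Type*} [DecidableEq ι] (T : ι → α → α)
    {a b : ι} (hab : a ≠ b) (g : α) (hcomm : T b (T a g) = T a (T b g)) {l : List ι}
    (hl : l.Nodup) :
    l.foldr (fun i h => (T i)^[(Pi.single a 1 + Pi.single b 1 : ι → ℕ) i] h) g
      = (if a ∈ l then T a else id) ((if b ∈ l then T b else id) g) := by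
  induction l with
  | nil => simp
  | cons c l ih =>
    obtain ⟨hcl, hl⟩ := List.nodup_cons.1 hl
    rw [List.foldr_cons, ih hl]
    by_cases hca : c = a
    · subst hca
      simp [hab, hab.symm, hcl]
    by_cases hcb : c = b
    · subst hcb
      by_cases hal : a ∈ l <;> simp [hab, hca, hcl, hal, hcomm]
    · simp [hca, hcb, Ne.symm hca, Ne.symm hcb]

section PartialDerivatives

variable {n : ℕ}

theorem mderiv'_zero (g : (Fin n → ℝ) → ℝ) : mderiv' 0 g = g := by
  simp [mderiv']

theorem mderiv'_single (i : Fin n) (m : ℕ) (g : (Fin n → ℝ) → ℝ) :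
    mderiv' (Pi.single i m) g = (pderiv' i)^[m] g := by
  simpa [mderiv'] using List.foldr_iterate_single pderiv' i m g (List.nodup_finRange n)

theorem pderiv'_comm {g : (Fin n → ℝ) → ℝ} (hg : ContDiff ℝ 2 g) (i j : Fin n) :
    pderiv' i (pderiv' j g) = pderiv' j (pderiv' i g) := by
  ext x
  have hsecond : ∀ a b : Fin n, pderiv' a (pderiv' b g) x
      = fderiv ℝ (fderiv ℝ g) x (Pi.single a 1) (Pi.single b 1) := by
    intro a b
    change fderiv ℝ (fun y => fderiv ℝ g y (Pi.single b 1)) x (Pi.single a 1) = _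
    rw [fderiv_clm_apply ((hg.fderiv_right (m := 1) le_rfl).differentiable one_ne_zero x)
      (differentiableAt_const _)]
    simp
  rw [hsecond, hsecond, (hg.contDiffAt.isSymmSndFDerivAt (by simp)).eq]

theorem mderiv'_single_add_single {i j : Fin n} (hij : i ≠ j) {g : (Fin n → ℝ) → ℝ}
    (hg : ContDiff ℝ 2 g) :
    mderiv' (Pi.single i 1 + Pi.single j 1) g = pderiv' i (pderiv' j g) := by
  simpa [mderiv'] using List.foldr_iterate_single_add_single pderiv' hij g (pderiv'_comm hg j i)
    (List.nodup_finRange n)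

theorem fderiv_single_apply_eq_pderiv' {V : (Fin n → ℝ) → Fin n → ℝ} {y : Fin n → ℝ}
    (hV : DifferentiableAt ℝ V y) (j k : Fin n) :
    fderiv ℝ V y (Pi.single j 1) k = pderiv' j (fun z => V z k) y := by
  simp [pderiv', fderiv_apply hV]

theorem norm_fderiv_le_sum_abs_pderiv' (f : (Fin n → ℝ) → ℝ) (y : Fin n → ℝ) :
    ‖fderiv ℝ f y‖ ≤ ∑ j, |pderiv' j f y| :=
  (fderiv ℝ f y).norm_le_sum_norm_apply_single

theorem DjNorm_nonneg (j : ℕ) (V : (Fin n → ℝ) → Fin n → ℝ) (U : Set (Fin n → ℝ)) :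
    0 ≤ DjNorm j V U :=
  Finset.sum_nonneg fun _ _ => Finset.sum_nonneg fun _ _ =>
    Real.sSup_nonneg (by rintro _ ⟨y, -, rfl⟩; exact abs_nonneg _)

theorem sum_sum_sSup_le_DjNorm_one (V : (Fin n → ℝ) → Fin n → ℝ) (U : Set (Fin n → ℝ)) :
    ∑ j, ∑ k, sSup ((fun y => |pderiv' j (fun z => V z k) y|) '' U) ≤ DjNorm 1 V U := by
  have hval : ∀ j : Fin n, (fun i => ((Pi.single j 1 : Fin n → Fin 2) i : ℕ)) = Pi.single j 1 := by
    intro j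
    ext i
    rcases eq_or_ne i j with rfl | hij <;> simp [*]
  calc _ = ∑ β ∈ Finset.univ.image (fun j : Fin n => (Pi.single j 1 : Fin n → Fin 2)),
        ∑ k, sSup ((fun y => |mderiv' (fun i => (β i : ℕ)) (fun z => V z k) y|) '' U) := by
        rw [Finset.sum_image fun i _ j _ h => by simpa [Pi.single_apply] using congrFun h i]
        simp [hval, mderiv'_single]
    _ ≤ DjNorm 1 V U := by
        refine Finset.sum_le_sum_of_subset_of_nonneg ?_ fun β _ _ => Finset.sum_nonneg
          fun k _ => Real.sSup_nonneg (by rintro _ ⟨y, -, rfl⟩; exact abs_nonneg _)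
        intro β hβ
        obtain ⟨j, -, rfl⟩ := Finset.mem_image.1 hβ
        simp [hval]

theorem tstar_le (V : (Fin n → ℝ) → Fin n → ℝ) (M : Set (Fin n → ℝ)) (t₀ : ℝ) :
    tstar V M t₀ ≤ t₀ := by
  unfold tstar
  split_ifs
  exacts [le_rfl, min_le_right _ _]

theorem mul_DjNorm_one_le_of_le_tstar {V : (Fin n → ℝ) → Fin n → ℝ} {M : Set (Fin n → ℝ)}
    {t₀ t : ℝ} (ht : t ≤ tstar V M t₀) : t * DjNorm 1 V M ≤ 1 / 2 := by
  unfold tstar at ht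
  split_ifs at ht with hN
  · simp [hN]
  · have hN0 : 0 < DjNorm 1 V M := (DjNorm_nonneg 1 V M).lt_of_ne' hN
    have := ht.trans (min_le_left _ _)
    rw [le_div_iff₀ (by positivity)] at this
    linarith

variable {V : (Fin n → ℝ) → Fin n → ℝ} {M : Set (Fin n → ℝ)}

theorem exists_norm_le_of_bddAbove_mderiv'
    (h : ∀ β : Fin n → ℕ, ∑ i, β i = 0 → ∀ k,
      BddAbove ((fun x => |mderiv' β (fun z => V z k) x|) '' M)) :
    ∃ C, ∀ y ∈ M, ‖V y‖ ≤ C := by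
  obtain ⟨C, hC0, hC⟩ := exists_forall_abs_le_of_bddAbove (f := fun k y => V y k)
    fun k => by simpa [mderiv'_zero] using h 0 (by simp) k
  exact ⟨C, fun y hy => (pi_norm_le_iff_of_nonneg hC0).2 fun k => hC k y hy⟩

theorem norm_fderiv_le_DjNorm_one (hV : Differentiable ℝ V)
    (h : ∀ β : Fin n → ℕ, ∑ i, β i = 1 → ∀ k,
      BddAbove ((fun x => |mderiv' β (fun z => V z k) x|) '' M))
    {y : Fin n → ℝ} (hy : y ∈ M) : ‖fderiv ℝ V y‖ ≤ DjNorm 1 V M :=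
  calc ‖fderiv ℝ V y‖ ≤ ∑ j, ∑ k, |pderiv' j (fun z => V z k) y| := by
        simpa [fderiv_single_apply_eq_pderiv' (hV y)] using
          (fderiv ℝ V y).norm_le_sum_sum_abs_apply_single
    _ ≤ ∑ j, ∑ k, sSup ((fun y => |pderiv' j (fun z => V z k) y|) '' M) :=
        Finset.sum_le_sum fun j _ => Finset.sum_le_sum fun k _ => le_csSup
          (by simpa [mderiv'_single] using h (Pi.single j 1) (by simp) k) (mem_image_of_mem _ hy)
    _ ≤ DjNorm 1 V M := sum_sum_sSup_le_DjNorm_one V M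

theorem exists_norm_fderiv_sub_le (hM : Convex ℝ M) (hV : ContDiff ℝ 2 V)
    (h : ∀ β : Fin n → ℕ, ∑ i, β i = 2 → ∀ k,
      BddAbove ((fun x => |mderiv' β (fun z => V z k) x|) '' M)) :
    ∃ C, 0 ≤ C ∧ ∀ a ∈ M, ∀ b ∈ M, ‖fderiv ℝ V a - fderiv ℝ V b‖ ≤ C * ‖a - b‖ := by
  have hVk : ∀ k, ContDiff ℝ 2 (fun z => V z k) := contDiff_pi.1 hV
  have hbdd : ∀ p : Fin n × Fin n × Fin n, BddAbove
      ((fun y => |pderiv' p.1 (pderiv' p.2.1 (fun z => V z p.2.2)) y|) '' M) := by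
    rintro ⟨i, j, k⟩
    rcases eq_or_ne i j with rfl | hij
    · simpa [mderiv'_single] using h (Pi.single i 2) (by simp) k
    · have := h (Pi.single i 1 + Pi.single j 1) (by simp [Finset.sum_add_distrib]) k
      rwa [mderiv'_single_add_single hij (hVk k)] at this
  obtain ⟨B, hB0, hB⟩ := exists_forall_abs_le_of_bddAbove hbdd
  have hpartial : ∀ j k, ∀ a ∈ M, ∀ b ∈ M,
      |pderiv' j (fun z => V z k) a - pderiv' j (fun z => V z k) b| ≤ n * B * ‖a - b‖ := by
    intro j k a ha b hb
    have hdiff : Differentiable ℝ (pderiv' j (fun z => V z k)) :=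
      (((hVk k).fderiv_right (m := 1) le_rfl).clm_apply contDiff_const).differentiable
        one_ne_zero
    refine hM.norm_image_sub_le_of_norm_fderiv_le (fun y _ => hdiff y) (fun y hy => ?_) hb ha
    calc _ ≤ ∑ i, |pderiv' i (pderiv' j (fun z => V z k)) y| := norm_fderiv_le_sum_abs_pderiv' _ _
      _ ≤ ∑ _i : Fin n, B := Finset.sum_le_sum fun i _ => hB (i, j, k) y hy
      _ = n * B := by simp
  refine ⟨n * n * (n * B), by positivity, fun a ha b hb => ?_⟩
  calc ‖fderiv ℝ V a - fderiv ℝ V b‖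
      ≤ ∑ j, ∑ k, |pderiv' j (fun z => V z k) a - pderiv' j (fun z => V z k) b| := by
        simpa [fderiv_single_apply_eq_pderiv' ((hV.differentiable two_ne_zero) _)] using
          (fderiv ℝ V a - fderiv ℝ V b).norm_le_sum_sum_abs_apply_single
    _ ≤ ∑ _j : Fin n, ∑ _k : Fin n, n * B * ‖a - b‖ :=
        Finset.sum_le_sum fun j _ => Finset.sum_le_sum fun k _ => hpartial j k a ha b hb
    _ = n * n * (n * B) * ‖a - b‖ := by rw [Finset.sum_const, Finset.sum_const]; simp; ring

end PartialDerivatives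

theorem one_sub_mul_le_of_forall_le_add_mul {α : Type*} {f : α → ℝ} {s : Set α} {a θ : ℝ}
    (hθ : θ ≤ 1) (hbdd : BddAbove (f '' s))
    (h : ∀ B, (∀ r ∈ s, f r ≤ B) → ∀ r ∈ s, f r ≤ a + θ * B) {r : α} (hr : r ∈ s) :
    (1 - θ) * f r ≤ a := by
  have hS : ∀ r ∈ s, f r ≤ sSup (f '' s) := fun r hr => le_csSup hbdd (mem_image_of_mem f hr)
  have hSa : sSup (f '' s) ≤ a + θ * sSup (f '' s) :=
    csSup_le ⟨_, mem_image_of_mem f hr⟩ (by rintro _ ⟨r', hr', rfl⟩; exact h _ hS r' hr')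
  nlinarith [hS r hr]

theorem exists_tendsto_nhdsNE_of_norm_sub_le {F : Type*} [NormedAddCommGroup F] [CompleteSpace F]
    {Q : ℝ → F} {K δ : ℝ} (hδ : 0 < δ)
    (h : ∀ u v, u ≠ 0 → v ≠ 0 → |u| ≤ δ → |v| ≤ δ → ‖Q u - Q v‖ ≤ K * (|u| + |v|)) :
    ∃ D, Tendsto Q (𝓝[≠] 0) (𝓝 D) := by
  refine cauchy_map_iff_exists_tendsto.1 (cauchy_map_iff.2 ⟨inferInstance, ?_⟩)
  rw [tendsto_uniformity_iff_dist_tendsto_zero]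
  have hsmall : ∀ᶠ u in 𝓝[≠] (0 : ℝ), u ≠ 0 ∧ |u| ≤ δ :=
    eventually_mem_nhdsWithin.and (nhdsWithin_le_nhds (by
      filter_upwards [Metric.closedBall_mem_nhds 0 hδ] with u hu
      simpa using hu))
  have hlim : Tendsto (fun p : ℝ × ℝ => K * (|p.1| + |p.2|)) (𝓝[≠] 0 ×ˢ 𝓝[≠] 0) (𝓝 0) := by
    have : Tendsto (fun p : ℝ × ℝ => K * (|p.1| + |p.2|)) (𝓝 (0, 0)) (𝓝 (K * (|0| + |0|))) :=
      (continuous_const.mul ((continuous_abs.comp continuous_fst).add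
        (continuous_abs.comp continuous_snd))).tendsto _
    have hle : 𝓝[≠] (0 : ℝ) ×ˢ 𝓝[≠] (0 : ℝ) ≤ 𝓝 ((0 : ℝ), (0 : ℝ)) := by
      rw [nhds_prod_eq]
      exact Filter.prod_mono nhdsWithin_le_nhds nhdsWithin_le_nhds
    simpa using this.mono_left hle
  refine squeeze_zero' (Eventually.of_forall fun _ => dist_nonneg) ?_ hlim
  filter_upwards [hsmall.prod_mk hsmall] with p hp
  rw [dist_eq_norm]
  exact h _ _ hp.1.1 hp.2.1 hp.1.2 hp.2.2

section IntegralEquation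

variable {E : Type*} [NormedAddCommGroup E] [NormedSpace ℝ E]

theorem norm_le_of_eq_add_integral {φ ψ : ℝ → E} {c : E} {t L b : ℝ} (hL : 0 ≤ L) (hb : 0 ≤ b)
    (htL : t * L ≤ 1 / 2) (hφ : ∀ s ∈ Icc 0 t, φ s = c + ∫ r in 0..s, ψ r)
    (hψ : ∀ r ∈ Icc 0 t, ‖ψ r‖ ≤ L * ‖φ r‖ + b)
    (hbdd : BddAbove ((fun s => ‖φ s‖) '' Icc 0 t)) {s : ℝ} (hs : s ∈ Icc 0 t) :
    ‖φ s‖ ≤ 2 * (‖c‖ + t * b) := by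
  have ht : 0 ≤ t := hs.1.trans hs.2
  suffices (1 - t * L) * ‖φ s‖ ≤ ‖c‖ + t * b by nlinarith [norm_nonneg (φ s)]
  refine one_sub_mul_le_of_forall_le_add_mul (by linarith) hbdd (fun B hB s hs => ?_) hs
  have hB0 : 0 ≤ B := (norm_nonneg _).trans (hB 0 ⟨le_rfl, ht⟩)
  have hint : ‖∫ r in 0..s, ψ r‖ ≤ (L * B + b) * |s - 0| :=
    intervalIntegral.norm_integral_le_of_norm_le_const fun r hr => by
      rw [uIoc_of_le hs.1] at hr
      have hr' : r ∈ Icc 0 t := ⟨hr.1.le, hr.2.trans hs.2⟩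
      exact (hψ r hr').trans (by gcongr; exact hB r hr')
  rw [sub_zero, abs_of_nonneg hs.1] at hint
  calc ‖φ s‖ ≤ ‖c‖ + ‖∫ r in 0..s, ψ r‖ := by rw [hφ s hs]; exact norm_add_le _ _
    _ ≤ ‖c‖ + (L * B + b) * t := by gcongr; exact hint.trans (by gcongr; exact hs.2)
    _ = ‖c‖ + t * b + t * L * B := by ring

def IsIntegralSolution (V : E → E) (c : ℝ → E) (x : E) (t : ℝ) (y : ℝ → E) : Prop :=
  ∀ s ∈ Icc 0 t, IntervalIntegrable (fun r => V (y r)) volume 0 s ∧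
    y s = x + c s + ∫ r in 0..s, V (y r)

variable {V : E → E} {M : Set E} {c : ℝ → E} {t L : ℝ}

theorem IsIntegralSolution.sub_eq {x₁ x₂ : E} {y₁ y₂ : ℝ → E}
    (h₁ : IsIntegralSolution V c x₁ t y₁) (h₂ : IsIntegralSolution V c x₂ t y₂) {s : ℝ}
    (hs : s ∈ Icc 0 t) :
    y₁ s - y₂ s = (x₁ - x₂) + ∫ r in 0..s, (V (y₁ r) - V (y₂ r)) := by
  rw [(h₁ s hs).2, (h₂ s hs).2, intervalIntegral.integral_sub (h₁ s hs).1 (h₂ s hs).1]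
  abel

theorem IsIntegralSolution.norm_sub_le_two_mul {x₁ x₂ : E} {y₁ y₂ : ℝ → E} {C : ℝ}
    (h₁ : IsIntegralSolution V c x₁ t y₁) (h₂ : IsIntegralSolution V c x₂ t y₂)
    (hM₁ : MapsTo y₁ (Icc 0 t) M) (hM₂ : MapsTo y₂ (Icc 0 t) M)
    (hLip : ∀ a ∈ M, ∀ b ∈ M, ‖V a - V b‖ ≤ L * ‖a - b‖) (hC : ∀ a ∈ M, ‖V a‖ ≤ C)
    (hL : 0 ≤ L) (htL : t * L ≤ 1 / 2) {s : ℝ} (hs : s ∈ Icc 0 t) :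
    ‖y₁ s - y₂ s‖ ≤ 2 * ‖x₁ - x₂‖ := by
  have hC0 : 0 ≤ C := (norm_nonneg _).trans (hC _ (hM₁ hs))
  have hbdd : BddAbove ((fun s => ‖y₁ s - y₂ s‖) '' Icc 0 t) := by
    refine ⟨‖x₁ - x₂‖ + (C + C) * t, ?_⟩
    rintro _ ⟨s, hs, rfl⟩
    have hint : ‖∫ r in 0..s, (V (y₁ r) - V (y₂ r))‖ ≤ (C + C) * |s - 0| :=
      intervalIntegral.norm_integral_le_of_norm_le_const fun r hr => by
        rw [uIoc_of_le hs.1] at hr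
        have hr' : r ∈ Icc 0 t := ⟨hr.1.le, hr.2.trans hs.2⟩
        exact (norm_sub_le _ _).trans (add_le_add (hC _ (hM₁ hr')) (hC _ (hM₂ hr')))
    rw [sub_zero, abs_of_nonneg hs.1] at hint
    calc ‖y₁ s - y₂ s‖ ≤ ‖x₁ - x₂‖ + (C + C) * s := by
          rw [h₁.sub_eq h₂ hs]; exact (norm_add_le _ _).trans (by gcongr)
      _ ≤ ‖x₁ - x₂‖ + (C + C) * t := by gcongr; exact hs.2
  simpa using norm_le_of_eq_add_integral hL le_rfl htL (fun s hs => h₁.sub_eq h₂ hs)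
    (fun r hr => by simpa using hLip _ (hM₁ hr) _ (hM₂ hr)) hbdd hs

variable {y : ℝ → ℝ → E} {x e : E}

theorem norm_sub_le_of_forall_isIntegralSolution {C : ℝ}
    (hsol : ∀ u, |u| ≤ 1 → IsIntegralSolution V c (x + u • e) t (y u))
    (hM : ∀ u, |u| ≤ 1 → MapsTo (y u) (Icc 0 t) M)
    (hLip : ∀ a ∈ M, ∀ b ∈ M, ‖V a - V b‖ ≤ L * ‖a - b‖) (hC : ∀ a ∈ M, ‖V a‖ ≤ C)
    (hL : 0 ≤ L) (htL : t * L ≤ 1 / 2) {u v : ℝ} (hu : |u| ≤ 1) (hv : |v| ≤ 1) {s : ℝ}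
    (hs : s ∈ Icc 0 t) : ‖y u s - y v s‖ ≤ 2 * ‖e‖ * |u - v| := by
  have := (hsol u hu).norm_sub_le_two_mul (hsol v hv) (hM u hu) (hM v hv) hLip hC hL htL hs
  rwa [add_sub_add_left_eq_sub, ← sub_smul, norm_smul, Real.norm_eq_abs, mul_comm |u - v|,
    ← mul_assoc] at this

theorem inv_smul_sub_eq_add_integral
    (hsol : ∀ u, |u| ≤ 1 → IsIntegralSolution V c (x + u • e) t (y u)) {w : ℝ} (hw0 : w ≠ 0)
    (hw : |w| ≤ 1) {s : ℝ} (hs : s ∈ Icc 0 t) :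
    w⁻¹ • (y w s - y 0 s) = e + ∫ r in 0..s, w⁻¹ • (V (y w r) - V (y 0 r)) := by
  rw [(hsol w hw).sub_eq (hsol 0 (by simp)) hs, intervalIntegral.integral_smul]
  simp [hw0]

theorem norm_inv_smul_taylor_remainder_le {C : ℝ}
    (hM : ∀ u, |u| ≤ 1 → MapsTo (y u) (Icc 0 t) M)
    (hstab : ∀ u, |u| ≤ 1 → ∀ s ∈ Icc 0 t, ‖y u s - y 0 s‖ ≤ 2 * ‖e‖ * |u|)
    (hTaylor : ∀ a ∈ M, ∀ b ∈ M, ‖V a - V b - fderiv ℝ V b (a - b)‖ ≤ C * ‖a - b‖ ^ 2)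
    (hC : 0 ≤ C) {w : ℝ} (hw0 : w ≠ 0) (hw : |w| ≤ 1) {r : ℝ} (hr : r ∈ Icc 0 t) :
    ‖w⁻¹ • (V (y w r) - V (y 0 r) - fderiv ℝ V (y 0 r) (y w r - y 0 r))‖
      ≤ 4 * C * ‖e‖ ^ 2 * |w| := by
  rw [norm_smul, norm_inv, Real.norm_eq_abs, inv_mul_le_iff₀ (abs_pos.2 hw0)]
  calc _ ≤ C * ‖y w r - y 0 r‖ ^ 2 := hTaylor _ (hM w hw hr) _ (hM 0 (by simp) hr)
    _ ≤ C * (2 * ‖e‖ * |w|) ^ 2 := by gcongr; exact hstab w hw r hr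
    _ = |w| * (4 * C * ‖e‖ ^ 2 * |w|) := by ring

theorem norm_slope_sub_slope_le {C : ℝ}
    (hsol : ∀ u, |u| ≤ 1 → IsIntegralSolution V c (x + u • e) t (y u))
    (hM : ∀ u, |u| ≤ 1 → MapsTo (y u) (Icc 0 t) M)
    (hstab : ∀ u, |u| ≤ 1 → ∀ s ∈ Icc 0 t, ‖y u s - y 0 s‖ ≤ 2 * ‖e‖ * |u|)
    (hDV : ∀ a ∈ M, ‖fderiv ℝ V a‖ ≤ L)
    (hTaylor : ∀ a ∈ M, ∀ b ∈ M, ‖V a - V b - fderiv ℝ V b (a - b)‖ ≤ C * ‖a - b‖ ^ 2)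
    (hL : 0 ≤ L) (hC : 0 ≤ C) (htL : t * L ≤ 1 / 2) (ht : 0 ≤ t)
    {u v : ℝ} (hu0 : u ≠ 0) (hv0 : v ≠ 0) (hu : |u| ≤ 1) (hv : |v| ≤ 1) :
    ‖u⁻¹ • (y u t - y 0 t) - v⁻¹ • (y v t - y 0 t)‖ ≤ 8 * C * ‖e‖ ^ 2 * t * (|u| + |v|) := by
  have h0 : |(0 : ℝ)| ≤ 1 := by simp
  set f : ℝ → ℝ → E := fun w r => w⁻¹ • (V (y w r) - V (y 0 r)) with hf
  have hf_int : ∀ w, |w| ≤ 1 → ∀ s ∈ Icc 0 t, IntervalIntegrable (f w) volume 0 s :=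
    fun w hw s hs => ((hsol w hw s hs).1.sub (hsol 0 h0 s hs).1).smul w⁻¹
  have hslope_le : ∀ w, w ≠ 0 → |w| ≤ 1 → ∀ s ∈ Icc 0 t,
      ‖w⁻¹ • (y w s - y 0 s)‖ ≤ 2 * ‖e‖ := by
    intro w hw0 hw s hs
    rw [norm_smul, norm_inv, Real.norm_eq_abs, inv_mul_le_iff₀ (abs_pos.2 hw0)]
    linarith [hstab w hw s hs]
  have key := norm_le_of_eq_add_integral (c := 0) (ψ := fun r => f u r - f v r)
    (φ := fun s => u⁻¹ • (y u s - y 0 s) - v⁻¹ • (y v s - y 0 s))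
    (b := 4 * C * ‖e‖ ^ 2 * (|u| + |v|)) hL (by positivity) htL ?_ ?_ ?_ ⟨ht, le_rfl⟩
  · exact key.trans_eq (by simp; ring)
  · intro s hs
    rw [inv_smul_sub_eq_add_integral hsol hu0 hu hs, inv_smul_sub_eq_add_integral hsol hv0 hv hs,
      intervalIntegral.integral_sub (hf_int u hu s hs) (hf_int v hv s hs)]
    abel
  · intro r hr
    -- linearise `V` at `y 0 r`: the linear part acts on the difference of the slopes
    have hsplit : f u r - f v r = fderiv ℝ V (y 0 r)
          (u⁻¹ • (y u r - y 0 r) - v⁻¹ • (y v r - y 0 r))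
        + u⁻¹ • (V (y u r) - V (y 0 r) - fderiv ℝ V (y 0 r) (y u r - y 0 r))
        - v⁻¹ • (V (y v r) - V (y 0 r) - fderiv ℝ V (y 0 r) (y v r - y 0 r)) := by
      simp only [hf, map_sub, map_smul, smul_sub]
      abel
    rw [hsplit]
    refine (norm_sub_le _ _).trans ((add_le_add_left (norm_add_le _ _) _).trans ?_)
    have := (fderiv ℝ V (y 0 r)).le_of_opNorm_le (hDV _ (hM 0 h0 hr))
      (u⁻¹ • (y u r - y 0 r) - v⁻¹ • (y v r - y 0 r))
    linarith [norm_inv_smul_taylor_remainder_le hM hstab hTaylor hC hu0 hu hr,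
      norm_inv_smul_taylor_remainder_le hM hstab hTaylor hC hv0 hv hr]
  · refine ⟨2 * ‖e‖ + 2 * ‖e‖, ?_⟩
    rintro _ ⟨s, hs, rfl⟩
    exact (norm_sub_le _ _).trans (add_le_add (hslope_le u hu0 hu s hs) (hslope_le v hv0 hv s hs))

theorem exists_hasDerivAt_of_forall_isIntegralSolution [CompleteSpace E] {C₀ C₂ : ℝ}
    (hsol : ∀ u, |u| ≤ 1 → IsIntegralSolution V c (x + u • e) t (y u))
    (hM : ∀ u, |u| ≤ 1 → MapsTo (y u) (Icc 0 t) M)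
    (hLip : ∀ a ∈ M, ∀ b ∈ M, ‖V a - V b‖ ≤ L * ‖a - b‖) (hC₀ : ∀ a ∈ M, ‖V a‖ ≤ C₀)
    (hDV : ∀ a ∈ M, ‖fderiv ℝ V a‖ ≤ L)
    (hTaylor : ∀ a ∈ M, ∀ b ∈ M, ‖V a - V b - fderiv ℝ V b (a - b)‖ ≤ C₂ * ‖a - b‖ ^ 2)
    (hL : 0 ≤ L) (hC₂ : 0 ≤ C₂) (htL : t * L ≤ 1 / 2) (ht : 0 ≤ t) :
    ∃ D, HasDerivAt (fun u => y u t) D 0 := by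
  have hstab : ∀ u, |u| ≤ 1 → ∀ s ∈ Icc 0 t, ‖y u s - y 0 s‖ ≤ 2 * ‖e‖ * |u| := fun u hu s hs => by
    simpa using norm_sub_le_of_forall_isIntegralSolution hsol hM hLip hC₀ hL htL hu
      (v := 0) (by simp) hs
  obtain ⟨D, hD⟩ := exists_tendsto_nhdsNE_of_norm_sub_le one_pos fun u v hu0 hv0 hu hv =>
    norm_slope_sub_slope_le hsol hM hstab hDV hTaylor hL hC₂ htL ht hu0 hv0 hu hv
  exact ⟨D, hasDerivAt_iff_tendsto_slope.2 (hD.congr fun u => by rw [slope_def_module, sub_zero])⟩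

end IntegralEquation

theorem hasDerivAt_integral_comp {Ω E : Type*} [MeasurableSpace Ω] {P : Measure Ω}
    [IsFiniteMeasure P] [NormedAddCommGroup E] [NormedSpace ℝ E] [MeasurableSpace E]
    [BorelSpace E] [SecondCountableTopology E] {Y : ℝ → Ω → E} {D : Ω → E} {g : E → ℝ}
    {ε C B B' : ℝ} (hε : 0 < ε) (hY : ∀ u, Measurable (Y u))
    (hYlip : ∀ ω, ∀ u ∈ Metric.ball 0 ε, ∀ v ∈ Metric.ball 0 ε, ‖Y u ω - Y v ω‖ ≤ C * |u - v|)
    (hD : ∀ ω, HasDerivAt (fun u => Y u ω) (D ω) 0) (hg : ContDiff ℝ 1 g)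
    (hgB : ∀ y, |g y| ≤ B) (hgB' : ∀ y, ‖fderiv ℝ g y‖ ≤ B') :
    HasDerivAt (fun u => ∫ ω, g (Y u ω) ∂P) (∫ ω, fderiv ℝ g (Y 0 ω) (D ω) ∂P) 0 := by
  have hgdiff : Differentiable ℝ g := hg.differentiable one_ne_zero
  have hB' : 0 ≤ B' := (norm_nonneg _).trans (hgB' 0)
  have hDmeas : Measurable D := by
    refine measurable_of_tendsto_metrizable' (𝓝[≠] (0 : ℝ))
      (f := fun u ω => slope (fun u => Y u ω) 0 u) (fun u => ?_)
      (tendsto_pi_nhds.2 fun ω => hasDerivAt_iff_tendsto_slope.1 (hD ω))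
    simp only [slope_def_module]
    exact ((hY u).sub (hY 0)).const_smul _
  refine (hasDerivAt_integral_of_dominated_loc_of_lip (bound := fun _ => B' * C)
    (Metric.ball_mem_nhds 0 hε) (Eventually.of_forall fun u => ?_) ?_ ?_ (ae_of_all _ fun ω => ?_)
    (integrable_const _) (ae_of_all _ fun ω => ?_)).2
  · exact (hg.continuous.measurable.comp (hY u)).aestronglyMeasurable
  · exact .of_bound (hg.continuous.measurable.comp (hY 0)).aestronglyMeasurable B
      (ae_of_all _ fun ω => hgB _)
  · exact (((hg.continuous_fderiv one_ne_zero).comp continuous_fst).clm_apply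
      continuous_snd).measurable.comp ((hY 0).prodMk hDmeas) |>.aestronglyMeasurable
  · refine LipschitzOnWith.of_dist_le_mul fun u hu v hv => ?_
    rw [Real.coe_nnabs, dist_eq_norm, Real.dist_eq]
    calc ‖g (Y u ω) - g (Y v ω)‖ ≤ B' * ‖Y u ω - Y v ω‖ :=
          convex_univ.norm_image_sub_le_of_norm_fderiv_le (fun y _ => hgdiff y)
            (fun y _ => hgB' y) trivial trivial
      _ ≤ B' * (C * |u - v|) := by gcongr; exact hYlip ω u hu v hv
      _ ≤ |B' * C| * |u - v| := by rw [← mul_assoc]; gcongr; exact le_abs_self _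
  · exact (hgdiff (Y 0 ω)).hasFDerivAt.comp_hasDerivAt 0 (hD ω)

theorem hasDerivAt_integral_of_forall_isIntegralSolution {Ω E : Type*} [MeasurableSpace Ω]
    {P : Measure Ω} [IsFiniteMeasure P] [NormedAddCommGroup E] [NormedSpace ℝ E] [CompleteSpace E]
    [MeasurableSpace E] [BorelSpace E] [SecondCountableTopology E] {V : E → E} {M : Set E}
    {c : Ω → ℝ → E} {Y : ℝ → ℝ → Ω → E} {g : E → ℝ} {x e : E} {t L C₀ C₂ B B' : ℝ}
    (hsol : ∀ ω u, |u| ≤ 1 → IsIntegralSolution V (c ω) (x + u • e) t (Y u · ω))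
    (hM : ∀ ω u, |u| ≤ 1 → MapsTo (Y u · ω) (Icc 0 t) M) (hY : ∀ u, Measurable (Y u t))
    (hLip : ∀ a ∈ M, ∀ b ∈ M, ‖V a - V b‖ ≤ L * ‖a - b‖) (hC₀ : ∀ a ∈ M, ‖V a‖ ≤ C₀)
    (hDV : ∀ a ∈ M, ‖fderiv ℝ V a‖ ≤ L)
    (hTaylor : ∀ a ∈ M, ∀ b ∈ M, ‖V a - V b - fderiv ℝ V b (a - b)‖ ≤ C₂ * ‖a - b‖ ^ 2)
    (hL : 0 ≤ L) (hC₂ : 0 ≤ C₂) (htL : t * L ≤ 1 / 2) (ht : 0 ≤ t) (hg : ContDiff ℝ 1 g)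
    (hgB : ∀ y, |g y| ≤ B) (hgB' : ∀ y, ‖fderiv ℝ g y‖ ≤ B') :
    ∃ D : Ω → E, (∀ ω, HasDerivAt (fun u => Y u t ω) (D ω) 0) ∧
      HasDerivAt (fun u => ∫ ω, g (Y u t ω) ∂P) (∫ ω, fderiv ℝ g (Y 0 t ω) (D ω) ∂P) 0 := by
  choose D hD using fun ω => exists_hasDerivAt_of_forall_isIntegralSolution (hsol ω) (hM ω)
    hLip hC₀ hDV hTaylor hL hC₂ htL ht
  have hball : ∀ u : ℝ, u ∈ Metric.ball 0 1 → |u| ≤ 1 := fun u hu => by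
    simpa using (mem_ball_zero_iff.1 hu).le
  refine ⟨D, hD, hasDerivAt_integral_comp (C := 2 * ‖e‖) one_pos hY (fun ω u hu v hv => ?_) hD hg
    hgB hgB'⟩
  exact norm_sub_le_of_forall_isIntegralSolution (hsol ω) (hM ω) hLip hC₀ hL htL (hball u hu)
    (hball v hv) ⟨ht, le_rfl⟩

theorem stmt9_general {n : ℕ} (t₀ : ℝ)
    (K M : Set (Fin n → ℝ)) (hMconv : Convex ℝ M)
    (V : (Fin n → ℝ) → Fin n → ℝ) (hV : ContDiff ℝ 3 V)
    (hVbdd : ∀ j : ℕ, j ≤ 3 → ∀ β : Fin n → ℕ, (∑ i, β i) = j → ∀ k : Fin n,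
      BddAbove ((fun x => |mderiv' β (fun z => V z k) x|) '' M))
    {Ω : Type*} [MeasurableSpace Ω] (P : Measure Ω) [IsProbabilityMeasure P]
    (X : ℝ → Ω → Fin n → ℝ)
    (Y : (Fin n → ℝ) → ℝ → Ω → Fin n → ℝ)
    (hYint : ∀ x ∈ ⋃ y ∈ K, Metric.ball y (3:ℝ), ∀ t ∈ Set.Icc (0:ℝ) t₀, ∀ ω : Ω,
      IntervalIntegrable (fun s => V (Y x s ω)) volume 0 t)
    (hY : ∀ x ∈ ⋃ y ∈ K, Metric.ball y (3:ℝ), ∀ t ∈ Set.Icc (0:ℝ) t₀, ∀ ω : Ω,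
      Y x t ω = x + X t ω + ∫ s in (0:ℝ)..t, V (Y x s ω))
    (hYM : ∀ x ∈ ⋃ y ∈ K, Metric.ball y (3:ℝ), ∀ t ∈ Set.Icc (0:ℝ) t₀, ∀ ω : Ω,
      Y x t ω ∈ M)
    (hYmeas : ∀ x : Fin n → ℝ, ∀ t : ℝ, Measurable (fun ω => Y x t ω))
    (g : (Fin n → ℝ) → ℝ) (hg : ContDiff ℝ 2 g)
    (hgbdd : ∃ C : ℝ, ∀ x : Fin n → ℝ,
      |g x| ≤ C ∧ ‖fderiv ℝ g x‖ ≤ C ∧ ‖fderiv ℝ (fderiv ℝ g) x‖ ≤ C) :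
    ∀ t ∈ Set.Ioc (0:ℝ) (tstar V M t₀), ∀ x ∈ K, ∀ i : Fin n,
      ∃ DY : Ω → Fin n → ℝ,
        (∀ ω : Ω, Filter.Tendsto
          (fun u : ℝ => u⁻¹ • (Y (x + u • (Pi.single i 1 : Fin n → ℝ)) t ω - Y x t ω))
          (𝓝[≠] (0:ℝ)) (𝓝 (DY ω))) ∧
        HasDerivAt (fun u : ℝ => ∫ ω, g (Y (x + u • (Pi.single i 1 : Fin n → ℝ)) t ω) ∂P)
          (∫ ω, fderiv ℝ g (Y x t ω) (DY ω) ∂P) 0 := by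
  intro t ht x hx i
  set e : Fin n → ℝ := Pi.single i 1
  have htt₀ : t ≤ t₀ := ht.2.trans (tstar_le V M t₀)
  have hVdiff : Differentiable ℝ V := hV.differentiable (by norm_num)
  have hDV : ∀ y ∈ M, ‖fderiv ℝ V y‖ ≤ DjNorm 1 V M :=
    fun y => norm_fderiv_le_DjNorm_one hVdiff (hVbdd 1 (by norm_num))
  obtain ⟨C₀, hC₀⟩ := exists_norm_le_of_bddAbove_mderiv' (hVbdd 0 (by norm_num))
  obtain ⟨C₂, hC₂, hD2V⟩ :=
    exists_norm_fderiv_sub_le hMconv (hV.of_le (by norm_num)) (hVbdd 2 (by norm_num))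
  obtain ⟨Cg, hCg⟩ := hgbdd
  have hxu : ∀ u : ℝ, |u| ≤ 1 → x + u • e ∈ ⋃ y ∈ K, Metric.ball y 3 := fun u hu =>
    mem_biUnion hx (by simp [e, dist_eq_norm, norm_smul, Pi.norm_single]; linarith)
  have hIcc : ∀ s ∈ Icc 0 t, s ∈ Icc 0 t₀ := fun s hs => ⟨hs.1, hs.2.trans htt₀⟩
  obtain ⟨DY, hDY, hint⟩ := hasDerivAt_integral_of_forall_isIntegralSolution (P := P)
    (c := fun ω s => X s ω) (Y := fun u s ω => Y (x + u • e) s ω)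
    (fun ω u hu s hs => ⟨hYint _ (hxu u hu) s (hIcc s hs) ω, hY _ (hxu u hu) s (hIcc s hs) ω⟩)
    (fun ω u hu s hs => hYM _ (hxu u hu) s (hIcc s hs) ω) (fun u => hYmeas _ t)
    (fun a ha b hb => hMconv.norm_image_sub_le_of_norm_fderiv_le (fun y _ => hVdiff y) hDV hb ha)
    hC₀ hDV (fun a ha b hb => hMconv.norm_sub_sub_fderiv_le (fun y _ => hVdiff y) hC₂ hD2V ha hb)
    (DjNorm_nonneg 1 V M) hC₂ (mul_DjNorm_one_le_of_le_tstar ht.2) ht.1.le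
    (hg.of_le (by norm_num)) (fun y => (hCg y).1) (fun y => (hCg y).2.1)
  refine ⟨DY, fun ω => ?_, by simpa using hint⟩
  exact (hasDerivAt_iff_tendsto_slope.1 (hDY ω)).congr fun u => by simp [slope_def_module]

/-- In the random flow setup, for all `t ∈ (0, t*]`, `x ∈ K` and
`i ∈ {1,…,n}`, the pathwise derivatives `D_iY^x(t,ω)` exist and the partial derivative
`∂_i T_t g(x)` exists with `∂_i T_t g(x) = E[∇g(Y^x(t,·))·D_iY^x(t,·)]`. -/
theorem stmt9 {n : ℕ} (hn : 1 ≤ n) (t₀ : ℝ) (ht₀ : 0 < t₀)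
    (K M : Set (Fin n → ℝ)) (hMconv : Convex ℝ M)
    (V : (Fin n → ℝ) → Fin n → ℝ) (hV : ContDiff ℝ 3 V)
    (hVbdd : ∀ j : ℕ, j ≤ 3 → ∀ β : Fin n → ℕ, (∑ i, β i) = j → ∀ k : Fin n,
      BddAbove ((fun x => |mderiv' β (fun z => V z k) x|) '' M))
    {Ω : Type*} [MeasurableSpace Ω] (P : Measure Ω) [IsProbabilityMeasure P]
    (X : ℝ → Ω → Fin n → ℝ) (hX0 : ∀ ω, X 0 ω = 0)
    (Y : (Fin n → ℝ) → ℝ → Ω → Fin n → ℝ)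
    (hYint : ∀ x ∈ ⋃ y ∈ K, Metric.ball y (3:ℝ), ∀ t ∈ Set.Icc (0:ℝ) t₀, ∀ ω : Ω,
      IntervalIntegrable (fun s => V (Y x s ω)) volume 0 t)
    (hY : ∀ x ∈ ⋃ y ∈ K, Metric.ball y (3:ℝ), ∀ t ∈ Set.Icc (0:ℝ) t₀, ∀ ω : Ω,
      Y x t ω = x + X t ω + ∫ s in (0:ℝ)..t, V (Y x s ω))
    (hYM : ∀ x ∈ ⋃ y ∈ K, Metric.ball y (3:ℝ), ∀ t ∈ Set.Icc (0:ℝ) t₀, ∀ ω : Ω,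
      Y x t ω ∈ M)
    (hYmeas : ∀ x : Fin n → ℝ, ∀ t : ℝ, Measurable (fun ω => Y x t ω))
    (g : (Fin n → ℝ) → ℝ) (hg : ContDiff ℝ 2 g)
    (hgbdd : ∃ C : ℝ, ∀ x : Fin n → ℝ,
      |g x| ≤ C ∧ ‖fderiv ℝ g x‖ ≤ C ∧ ‖fderiv ℝ (fderiv ℝ g) x‖ ≤ C)
    (hTsupp : ∀ t : ℝ, 0 ≤ t → t ≤ t₀ → ∀ x : Fin n → ℝ, x ∉ K →
      (∫ ω, g (Y x t ω) ∂P) = 0) :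
    ∀ t ∈ Set.Ioc (0:ℝ) (tstar V M t₀), ∀ x ∈ K, ∀ i : Fin n,
      ∃ DY : Ω → Fin n → ℝ,
        (∀ ω : Ω, Filter.Tendsto
          (fun u : ℝ => u⁻¹ • (Y (x + u • (Pi.single i 1 : Fin n → ℝ)) t ω - Y x t ω))
          (𝓝[≠] (0:ℝ)) (𝓝 (DY ω))) ∧
        HasDerivAt (fun u : ℝ => ∫ ω, g (Y (x + u • (Pi.single i 1 : Fin n → ℝ)) t ω) ∂P)
          (∫ ω, fderiv ℝ g (Y x t ω) (DY ω) ∂P) 0 :=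
  stmt9_general t₀ K M hMconv V hV hVbdd P X Y hYint hY hYM hYmeas g hg hgbdd
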